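/- Let β ≥ 1, α < 2β + 1 with α ≠ 1, and λ ≠ 0. For x > 0, the function G(x) = (1/λ)·x^{1−α}/(1−α) − (1/2)·λ x^{2β−α+1}/(2β−α+1) · ∑_{n=0}^∞ [ ((1)_n (d)_n) / ((d+1)_n (3/2)_n (2)_n) ] (−λ²x^{2β}/4)ⁿ/n!, where d = −α/(2β) + 1/(2β) + 1, satisfies G'(x) = cos(λx^β)/(λx^α). -/

import Mathlib

/-!
For `y > 0`, `G y = (1/λ) ∑ₖ (-1)ᵏ λ²ᵏ/(2k)! · y^(2βk+1-α)/(2βk+1-α)`, a termwise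
antiderivative of `(1/λ) y^(-α) cos(λy^β)`: the summand `k = 0` is the leading term of `G`, and
the `n`-th term of the ₂F₃ series gives the summand `k = n + 1`, since `(d)ₙ/(d+1)ₙ = d/(d+n)`
produces the denominator `2β(n+1)+1-α` and `(3/2)ₙ (2)ₙ = (2n+2)!/(2·4ⁿ)`. Termwise
differentiation is justified by domination on `[x/2, 2x]`.
-/

noncomputable def poch (a : ℝ) (n : ℕ) : ℝ := ∏ i ∈ Finset.range n, (a + (i : ℝ))

open Filter Real Nat

lemma rpow_mul_natCast_add {y : ℝ} (hy : 0 < y) (q s : ℝ) (k : ℕ) :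
    y ^ (q * k + s) = (y ^ q) ^ k * y ^ s := by
  rw [rpow_add hy, rpow_mul_natCast hy.le]

lemma rpow_le_rpow_add_rpow_of_mem_Icc {a b y : ℝ} (ha : 0 < a) (hy : y ∈ Set.Icc a b)
    (s : ℝ) :
    y ^ s ≤ a ^ s + b ^ s := by
  have hy0 : 0 < y := ha.trans_le hy.1
  rcases le_total 0 s with hs | hs
  · linarith [rpow_le_rpow hy0.le hy.2 hs, rpow_nonneg ha.le s]
  · linarith [rpow_le_rpow_of_nonpos ha hy.1 hs, rpow_nonneg (ha.trans_le (hy.1.trans hy.2)).le s]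

section PowerSeriesInRpow

variable {a : ℕ → ℝ} {p q : ℝ}

lemma summable_mul_rpow (ha : ∀ r, 0 ≤ r → Summable fun k => a k * r ^ k) {y : ℝ}
    (hy : 0 < y) :
    Summable fun k : ℕ => a k * y ^ (q * k + p) := by
  simpa [rpow_mul_natCast_add hy, mul_assoc] using (ha _ (rpow_nonneg hy.le q)).mul_right (y ^ p)

lemma summable_mul_rpow_div (hq : 0 < q) (ha : ∀ r, 0 ≤ r → Summable fun k => a k * r ^ k)
    {y : ℝ} (hy : 0 < y) :
    Summable fun k : ℕ => a k * y ^ (q * k + p) / (q * k + p) := by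
  have hexp : Tendsto (fun k : ℕ => q * k + p) atTop atTop :=
    tendsto_atTop_add_const_right _ p (tendsto_natCast_atTop_atTop.const_mul_atTop hq)
  refine summable_of_isBigO_nat (summable_mul_rpow (p := p) (q := q) ha hy) ?_
  have hinv : (fun k : ℕ => (q * k + p)⁻¹) =O[atTop] (fun _ => (1 : ℝ)) :=
    (tendsto_inv_atTop_zero.comp hexp).isBigO_one ℝ
  simpa only [div_eq_mul_inv, mul_one] using
    (Asymptotics.isBigO_refl (fun k : ℕ => a k * y ^ (q * k + p)) atTop).mul hinv

theorem hasDerivAt_tsum_mul_rpow_div (hq : 0 < q) (hp : ∀ k : ℕ, q * k + p ≠ 0)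
    (ha : ∀ r, 0 ≤ r → Summable fun k => a k * r ^ k) {x : ℝ} (hx : 0 < x) :
    HasDerivAt (fun y => ∑' k : ℕ, a k * y ^ (q * k + p) / (q * k + p))
      (∑' k : ℕ, a k * x ^ (q * k + (p - 1))) x := by
  set M := (x / 2) ^ (p - 1) + (2 * x) ^ (p - 1)
  set R := (x / 2) ^ q + (2 * x) ^ q
  have hR : 0 ≤ R := by positivity
  have hx2 : 0 < x / 2 := by positivity
  have hIcc : Set.Ioo (x / 2) (2 * x) ⊆ Set.Icc (x / 2) (2 * x) := Set.Ioo_subset_Icc_self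
  have hderiv : ∀ (k : ℕ) y, y ∈ Set.Ioo (x / 2) (2 * x) →
      HasDerivAt (fun y => a k * y ^ (q * k + p) / (q * k + p))
        (a k * y ^ (q * k + (p - 1))) y := by
    intro k y hy
    have := ((hasDerivAt_rpow_const (p := q * k + p) (Or.inl (hx2.trans hy.1).ne')).const_mul
      (a k)).div_const (q * k + p)
    refine this.congr_deriv ?_
    rw [add_sub_assoc]
    field_simp [hp k]
  have hbound : ∀ (k : ℕ) y, y ∈ Set.Ioo (x / 2) (2 * x) →
      ‖a k * y ^ (q * k + (p - 1))‖ ≤ M * (|a k| * R ^ k) := by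
    intro k y hy
    have hy0 : 0 < y := hx2.trans hy.1
    rw [rpow_mul_natCast_add hy0, norm_mul, norm_mul, norm_pow, Real.norm_eq_abs,
      Real.norm_of_nonneg (rpow_nonneg hy0.le _), Real.norm_of_nonneg (rpow_nonneg hy0.le _)]
    have h1 := rpow_le_rpow_add_rpow_of_mem_Icc hx2 (hIcc hy) (p - 1)
    have h2 := pow_le_pow_left₀ (rpow_nonneg hy0.le q)
      (rpow_le_rpow_add_rpow_of_mem_Icc hx2 (hIcc hy) q) k
    calc |a k| * ((y ^ q) ^ k * y ^ (p - 1)) ≤ |a k| * (R ^ k * M) := by gcongr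
      _ = M * (|a k| * R ^ k) := by ring
  have hu : Summable fun k => M * (|a k| * R ^ k) := by
    refine ((ha R hR).abs.congr fun k => ?_).mul_left M
    rw [abs_mul, abs_pow, abs_of_nonneg hR]
  have hxmem : x ∈ Set.Ioo (x / 2) (2 * x) := ⟨by linarith, by linarith⟩
  exact hasDerivAt_tsum_of_isPreconnected hu isOpen_Ioo isPreconnected_Ioo hderiv hbound hxmem
    (summable_mul_rpow_div hq ha hx) hxmem

end PowerSeriesInRpow

lemma poch_succ (a : ℝ) (n : ℕ) : poch a (n + 1) = poch a n * (a + n) :=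
  Finset.prod_range_succ _ n

lemma poch_pos {a : ℝ} (ha : 0 < a) (n : ℕ) : 0 < poch a n :=
  Finset.prod_pos fun _ _ => by positivity

lemma poch_one (n : ℕ) : poch 1 n = n ! := by
  induction n with
  | zero => simp [poch]
  | succ n ih => rw [poch_succ, ih, factorial_succ]; push_cast; ring

lemma poch_two (n : ℕ) : poch 2 n = (n + 1)! := by
  induction n with
  | zero => simp [poch]
  | succ n ih => rw [poch_succ, ih, factorial_succ (n + 1)]; push_cast; ring

lemma four_pow_mul_factorial_mul_poch_three_halves (n : ℕ) :
    4 ^ n * n ! * poch (3 / 2) n = (2 * n + 1)! := by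
  induction n with
  | zero => simp [poch]
  | succ n ih =>
    rw [poch_succ, show 2 * (n + 1) + 1 = 2 * n + 1 + 1 + 1 by ring,
      factorial_succ (2 * n + 1 + 1), factorial_succ (2 * n + 1), factorial_succ n]
    push_cast
    rw [← ih]
    ring

lemma poch_add_one_mul (a : ℝ) (n : ℕ) : poch (a + 1) n * a = poch a n * (a + n) := by
  induction n with
  | zero => simp [poch]
  | succ n ih =>
    rw [poch_succ, poch_succ, mul_right_comm, ih]
    push_cast
    ring

noncomputable def cosCoeff (l : ℝ) (k : ℕ) : ℝ := (-1) ^ k * l ^ (2 * k) / (2 * k)!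

lemma summable_cosCoeff_mul_pow (l : ℝ) {r : ℝ} (hr : 0 ≤ r) :
    Summable fun k => cosCoeff l k * r ^ k :=
  (hasSum_cos (l * √r)).summable.congr fun k => by
    rw [cosCoeff, mul_pow, pow_mul √r, sq_sqrt hr]
    ring

lemma tsum_cosCoeff_mul_rpow (l β s : ℝ) {x : ℝ} (hx : 0 < x) :
    ∑' k : ℕ, cosCoeff l k * x ^ (2 * β * k + s) = x ^ s * cos (l * x ^ β) := by
  have hsq : x ^ (2 * β) = (x ^ β) ^ 2 := by
    rw [mul_comm, ← rpow_natCast, ← rpow_mul hx.le]; norm_num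
  rw [cos_eq_tsum, ← tsum_mul_left]
  refine tsum_congr fun k => ?_
  rw [rpow_mul_natCast_add hx, cosCoeff, hsq, mul_pow, pow_mul (x ^ β)]
  ring

lemma hypergeometric_term_eq {β α l d y : ℝ} (hβ : 0 < β) (hα : α < 2 * β + 1)
    (hl : l ≠ 0) (hd : 2 * β * d = 2 * β - α + 1) (hy : 0 < y) (n : ℕ) :
    1 / 2 * (l * y ^ (2 * β - α + 1)) / (2 * β - α + 1) *
        (poch 1 n * poch d n / (poch (d + 1) n * poch (3 / 2) n * poch 2 n) *
          (-(l ^ 2 * y ^ (2 * β)) / 4) ^ n / n !) =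
      -(1 / l) * (cosCoeff l (n + 1) * y ^ (2 * β * ↑(n + 1) + (1 - α)) /
        (2 * β * ↑(n + 1) + (1 - α))) := by
  have hd0 : 0 < d := by nlinarith
  have hpoch_d : poch d n = poch (d + 1) n * d / (d + n) := by
    rw [poch_add_one_mul, mul_div_cancel_right₀ _ (by positivity)]
  have hpoch_three_halves : poch (3 / 2) n = (2 * n + 1)! / (4 ^ n * n !) := by
    rw [← four_pow_mul_factorial_mul_poch_three_halves]; field_simp
  have hy_pow :
      y ^ (2 * β * ↑(n + 1) + (1 - α)) = (y ^ (2 * β)) ^ n * y ^ (2 * β - α + 1) := by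
    rw [← rpow_mul_natCast_add hy]; push_cast; ring_nf
  have hexp : 2 * β * ↑(n + 1) + (1 - α) = 2 * β * (d + n) := by push_cast; linarith
  have hpoch : 0 < poch (d + 1) n := poch_pos (by positivity) n
  rw [div_pow, neg_pow, hpoch_d, hpoch_three_halves, poch_one, poch_two, hy_pow, hexp, cosCoeff,
    show 2 * (n + 1) = 2 * n + 1 + 1 by ring, factorial_succ (2 * n + 1), factorial_succ n,
    ← hd]
  push_cast
  field_simp
  ring

theorem stmt_11 (β α l : ℝ) (hβ : 1 ≤ β) (hα : α < 2 * β + 1) (hα1 : α ≠ 1)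
    (hl : l ≠ 0) (d : ℝ) (hd : d = -α / (2 * β) + 1 / (2 * β) + 1)
    (x : ℝ) (hx : 0 < x) :
    HasDerivAt (fun y : ℝ => (1 / l) * y ^ (1 - α) / (1 - α) -
        (1 / 2) * (l * y ^ (2 * β - α + 1)) / (2 * β - α + 1) *
          ∑' n : ℕ, poch 1 n * poch d n /
            (poch (d + 1) n * poch (3/2) n * poch 2 n) *
            (-(l ^ 2 * y ^ (2 * β)) / 4) ^ n / (n.factorial : ℝ))
      (Real.cos (l * x ^ β) / (l * x ^ α)) x := by
  have hβ0 : 0 < β := by linarith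
  have hd' : 2 * β * d = 2 * β - α + 1 := by rw [hd]; field_simp; ring
  have hexp_ne : ∀ k : ℕ, 2 * β * k + (1 - α) ≠ 0 := by
    rintro (_ | k)
    · simpa [sub_eq_zero] using hα1.symm
    · have : (0 : ℝ) ≤ k := k.cast_nonneg
      push_cast
      nlinarith
  have hF := (hasDerivAt_tsum_mul_rpow_div (by positivity) hexp_ne
    (fun _ => summable_cosCoeff_mul_pow l) hx).const_mul (1 / l)
  rw [tsum_cosCoeff_mul_rpow l β _ hx] at hF
  refine (hF.congr_deriv ?_).congr_of_eventuallyEq ?_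
  · rw [show 1 - α - 1 = -α by ring, rpow_neg hx.le]
    field_simp
  · filter_upwards [Ioi_mem_nhds hx] with y hy
    have hsum := summable_mul_rpow_div (p := 1 - α) (q := 2 * β) (by positivity)
      (fun _ => summable_cosCoeff_mul_pow l) hy
    rw [hsum.tsum_eq_zero_add, ← tsum_mul_left,
      tsum_congr (hypergeometric_term_eq hβ0 hα hl hd' hy), tsum_mul_left]
    simp only [cosCoeff, one_div, pow_zero, mul_zero, mul_one, factorial_zero, cast_one,
      CharP.cast_eq_zero, zero_add, one_mul, div_one]
    ring
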